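/- arXiv:1202.0778 — 4 statements merged into one kernel-verified Lean document; each statement's English description precedes it below -/
import Mathlib

section
/- The function s ↦ (e^s − 1)² / (e^s − 1 − s) is monotone increasing on (0, ∞). -/
/-! The derivative of `(eˢ - 1)² / (eˢ - 1 - s)` is
`(eˢ - 1) (2eˢ(eˢ - 1 - s) - (eˢ - 1)²) / (eˢ - 1 - s)²`, and the bracket simplifies to
`2eˢ (sinh s - s)`, so for `s > 0` the derivative is nonnegative because `s ≤ sinh s`. -/

open Real

lemma exp_sub_one_sub_self_pos {s : ℝ} (hs : s ≠ 0) : 0 < exp s - 1 - s := by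
  linarith [add_one_lt_exp hs]

lemma hasDerivAt_sq_exp_sub_one_div {x : ℝ} (hx : x ≠ 0) :
    HasDerivAt (fun s => (exp s - 1) ^ 2 / (exp s - 1 - s))
      ((exp x - 1) * (2 * exp x * (exp x - 1 - x) - (exp x - 1) ^ 2) / (exp x - 1 - x) ^ 2) x := by
  have hnum : HasDerivAt (fun s => (exp s - 1) ^ 2) (2 * (exp x - 1) * exp x) x :=
    (((hasDerivAt_exp x).sub_const 1).fun_pow 2).congr_deriv (by ring)
  have hden : HasDerivAt (fun s => exp s - 1 - s) (exp x - 1) x :=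
    ((hasDerivAt_exp x).sub_const 1).sub (hasDerivAt_id x)
  exact (hnum.div hden (exp_sub_one_sub_self_pos hx).ne').congr_deriv (by ring)

lemma two_mul_exp_mul_sub_sq_eq (x : ℝ) :
    2 * exp x * (exp x - 1 - x) - (exp x - 1) ^ 2 = 2 * exp x * (sinh x - x) := by
  rw [sinh_eq, exp_neg]
  field_simp
  ring

lemma two_mul_exp_mul_sub_sq_nonneg {x : ℝ} (hx : 0 ≤ x) :
    0 ≤ 2 * exp x * (exp x - 1 - x) - (exp x - 1) ^ 2 := by
  rw [two_mul_exp_mul_sub_sq_eq]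
  exact mul_nonneg (by positivity) (sub_nonneg.2 (self_le_sinh_iff.2 hx))

theorem stmt_4 :
    MonotoneOn (fun s : ℝ => (Real.exp s - 1) ^ 2 / (Real.exp s - 1 - s))
      (Set.Ioi (0 : ℝ)) := by
  have hderiv (x : ℝ) (hx : x ∈ Set.Ioi 0) := hasDerivAt_sq_exp_sub_one_div (ne_of_gt hx)
  refine monotoneOn_of_hasDerivWithinAt_nonneg (convex_Ioi 0)
    (fun x hx => (hderiv x hx).continuousAt.continuousWithinAt)
    (fun x hx => (hderiv x (interior_subset hx)).hasDerivWithinAt) fun x hx => ?_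
  rw [interior_Ioi] at hx
  have hexp : 0 ≤ exp x - 1 := sub_nonneg.2 (one_le_exp (le_of_lt hx))
  exact div_nonneg (mul_nonneg hexp (two_mul_exp_mul_sub_sq_nonneg (le_of_lt hx))) (sq_nonneg _)
end

section
/- For constants K > 0, r₀ > 0 and m > 1, sup_{r > 0} min{1/r, r₀ − m/r, K·r − r₀ − 4/r} = min{ r₀/(m+1), 2K/(r₀ + √(r₀² + 20K)) }. -/
/-! On `r > 0` the function `1 / r` decreases while `r₀ - m / r` and `K r - r₀ - 4 / r` increase,
so the minimum of `1 / r` with either of them is at most its value at the crossing point,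
`r₁ = (m + 1) / r₀` resp. `r₂ = (r₀ + √(r₀² + 20K)) / (2K)`. At `r = max r₁ r₂` both increasing
functions lie above `1 / r = min (1 / r₁) (1 / r₂)`, so this bound is attained. -/

open Set

lemma min_le_of_antitoneOn_of_monotoneOn {α β : Type*} [LinearOrder α] [LinearOrder β]
    {s : Set α} {f g : α → β} (hf : AntitoneOn f s)
    (hg : MonotoneOn g s) {a : α} (ha : a ∈ s) (hfg : g a = f a) {r : α} (hr : r ∈ s) :
    min (f r) (g r) ≤ f a := by
  rcases le_total a r with h | h
  · exact (min_le_left _ _).trans (hf ha hr h)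
  · exact (min_le_right _ _).trans (hfg ▸ hg hr ha h)

lemma antitoneOn_one_div : AntitoneOn (fun r : ℝ => 1 / r) (Ioi 0) :=
  fun _ ha _ _ h => one_div_le_one_div_of_le ha h

lemma isGreatest_min_one_div_min {g₁ g₂ : ℝ → ℝ} (h₁ : MonotoneOn g₁ (Ioi 0))
    (h₂ : MonotoneOn g₂ (Ioi 0)) {r₁ r₂ : ℝ} (hr₁ : 0 < r₁) (hr₂ : 0 < r₂)
    (e₁ : g₁ r₁ = 1 / r₁) (e₂ : g₂ r₂ = 1 / r₂) :
    IsGreatest {z | ∃ r, 0 < r ∧ z = min (1 / r) (min (g₁ r) (g₂ r))}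
      (min (1 / r₁) (1 / r₂)) := by
  have hr : 0 < max r₁ r₂ := lt_max_of_lt_left hr₁
  have hinv : 1 / max r₁ r₂ = min (1 / r₁) (1 / r₂) := antitoneOn_one_div.map_max hr₁ hr₂
  refine ⟨⟨max r₁ r₂, hr, ?_⟩, ?_⟩
  · have le₁ : 1 / max r₁ r₂ ≤ g₁ (max r₁ r₂) := by
      rw [hinv]
      exact (min_le_left _ _).trans (e₁ ▸ h₁ hr₁ hr (le_max_left _ _))
    have le₂ : 1 / max r₁ r₂ ≤ g₂ (max r₁ r₂) := by
      rw [hinv]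
      exact (min_le_right _ _).trans (e₂ ▸ h₂ hr₂ hr (le_max_right _ _))
    rw [min_eq_left (le_min le₁ le₂), hinv]
  · rintro _ ⟨r, hr, rfl⟩
    exact le_min
      (((min_le_min_left _ (min_le_left _ _)).trans
        (min_le_of_antitoneOn_of_monotoneOn antitoneOn_one_div h₁ hr₁ e₁ hr)))
      ((min_le_min_left _ (min_le_right _ _)).trans
        (min_le_of_antitoneOn_of_monotoneOn antitoneOn_one_div h₂ hr₂ e₂ hr))

lemma monotoneOn_sub_div {c : ℝ} (hc : 0 ≤ c) (b : ℝ) :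
    MonotoneOn (fun r : ℝ => b - c / r) (Ioi 0) :=
  fun _ ha _ _ h => sub_le_sub_left (div_le_div_of_nonneg_left hc ha h) b

lemma monotoneOn_mul_sub_sub_div {a c : ℝ} (ha : 0 ≤ a) (hc : 0 ≤ c) (b : ℝ) :
    MonotoneOn (fun r : ℝ => a * r - b - c / r) (Ioi 0) :=
  fun _ hx _ _ h => sub_le_sub (sub_le_sub_right (mul_le_mul_of_nonneg_left h ha) b)
    (div_le_div_of_nonneg_left hc hx h)

theorem stmt_8 (K r₀ m : ℝ) (hK : 0 < K) (hr₀ : 0 < r₀) (hm : 1 < m) :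
    sSup {z : ℝ | ∃ r : ℝ, 0 < r ∧
        z = min (1 / r) (min (r₀ - m / r) (K * r - r₀ - 4 / r))} =
      min (r₀ / (m + 1)) (2 * K / (r₀ + Real.sqrt (r₀ ^ 2 + 20 * K))) := by
  set s := Real.sqrt (r₀ ^ 2 + 20 * K)
  have hs : s ^ 2 = r₀ ^ 2 + 20 * K := Real.sq_sqrt (by positivity)
  have hs₀ : 0 ≤ s := Real.sqrt_nonneg _
  have hr₁ : 0 < (m + 1) / r₀ := by positivity
  have hr₂ : 0 < (r₀ + s) / (2 * K) := by positivity
  have e₁ : r₀ - m / ((m + 1) / r₀) = 1 / ((m + 1) / r₀) := by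
    field_simp; ring
  -- `(r₀ + s) / (2K)` is the positive root of `K r² - r₀ r - 5 = 0`.
  have e₂ : K * ((r₀ + s) / (2 * K)) - r₀ - 4 / ((r₀ + s) / (2 * K)) =
      1 / ((r₀ + s) / (2 * K)) := by
    field_simp; linear_combination hs
  rw [(isGreatest_min_one_div_min (monotoneOn_sub_div (by linarith) r₀)
    (monotoneOn_mul_sub_sub_div hK.le zero_le_four r₀) hr₁ hr₂ e₁ e₂).csSup_eq,
    one_div_div, one_div_div]
end

section
/- Let L f = f_{xx} + x² f_{yy} + y² f_{zz} on ℝ³ with square field Γ(f) = f_x² + x² f_y² + y² f_z². Then for every smooth f : ℝ³ → ℝ, Γ₂(f) := ½ L Γ(f) − Γ(f, Lf) = f_{xx}² + f_y² + x² f_z² + 2x² f_{xy}² + 2y² f_{xz}² + x⁴ f_{yy}² + 2x²y² f_{yz}² + y⁴ f_{zz}² + 4x f_y f_{xy} + 4x²y f_z f_{yz} − 2x f_x f_{yy} − 2x²y f_y f_{zz}. -/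
/-- partial derivatives in each of three variables -/
noncomputable def pdx (f : ℝ → ℝ → ℝ → ℝ) : ℝ → ℝ → ℝ → ℝ :=
  fun x y z => deriv (fun x' => f x' y z) x

noncomputable def pdy (f : ℝ → ℝ → ℝ → ℝ) : ℝ → ℝ → ℝ → ℝ :=
  fun x y z => deriv (fun y' => f x y' z) y

noncomputable def pdz (f : ℝ → ℝ → ℝ → ℝ) : ℝ → ℝ → ℝ → ℝ :=
  fun x y z => deriv (fun z' => f x y z') z

namespace Stmt12Aux

def un (f : ℝ → ℝ → ℝ → ℝ) : ℝ × ℝ × ℝ → ℝ := fun p => f p.1 p.2.1 p.2.2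

def Sm (f : ℝ → ℝ → ℝ → ℝ) : Prop := ContDiff ℝ (⊤ : ℕ∞) (un f)

variable {f : ℝ → ℝ → ℝ → ℝ}

lemma Sm.diffAt (hf : Sm f) (p : ℝ × ℝ × ℝ) : DifferentiableAt ℝ (un f) p :=
  hf.differentiable (by simp) p

lemma pdx_eq (hf : Sm f) (x y z : ℝ) :
    pdx f x y z = fderiv ℝ (un f) (x, y, z) (1, 0, 0) := by
  have hc : HasDerivAt (fun t : ℝ => ((t, y, z) : ℝ × ℝ × ℝ)) (1, 0, 0) x := by
    have := (hasDerivAt_id x).prodMk (hasDerivAt_const x ((y, z) : ℝ × ℝ))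
    simpa [Prod.mk_zero_zero] using this
  have h := (hf.diffAt (x, y, z)).hasFDerivAt.comp_hasDerivAt x hc
  simpa [pdx, Function.comp_def, un] using h.deriv

lemma pdy_eq (hf : Sm f) (x y z : ℝ) :
    pdy f x y z = fderiv ℝ (un f) (x, y, z) (0, 1, 0) := by
  have hc : HasDerivAt (fun t : ℝ => ((x, t, z) : ℝ × ℝ × ℝ)) (0, 1, 0) y := by
    have := (hasDerivAt_const y x).prodMk ((hasDerivAt_id y).prodMk (hasDerivAt_const y z))
    simpa using this
  have h := (hf.diffAt (x, y, z)).hasFDerivAt.comp_hasDerivAt y hc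
  simpa [pdy, Function.comp_def, un] using h.deriv

lemma pdz_eq (hf : Sm f) (x y z : ℝ) :
    pdz f x y z = fderiv ℝ (un f) (x, y, z) (0, 0, 1) := by
  have hc : HasDerivAt (fun t : ℝ => ((x, y, t) : ℝ × ℝ × ℝ)) (0, 0, 1) z := by
    have := (hasDerivAt_const z x).prodMk ((hasDerivAt_const z y).prodMk (hasDerivAt_id z))
    simpa using this
  have h := (hf.diffAt (x, y, z)).hasFDerivAt.comp_hasDerivAt z hc
  simpa [pdz, Function.comp_def, un] using h.deriv

lemma un_pdx (hf : Sm f) : un (pdx f) = fun p => fderiv ℝ (un f) p (1, 0, 0) :=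
  funext fun p => pdx_eq hf p.1 p.2.1 p.2.2

lemma un_pdy (hf : Sm f) : un (pdy f) = fun p => fderiv ℝ (un f) p (0, 1, 0) :=
  funext fun p => pdy_eq hf p.1 p.2.1 p.2.2

lemma un_pdz (hf : Sm f) : un (pdz f) = fun p => fderiv ℝ (un f) p (0, 0, 1) :=
  funext fun p => pdz_eq hf p.1 p.2.1 p.2.2

lemma Sm.pdx (hf : Sm f) : Sm (pdx f) := by
  rw [Sm, un_pdx hf]
  exact (hf.fderiv_right (by simp)).clm_apply contDiff_const

lemma Sm.pdy (hf : Sm f) : Sm (pdy f) := by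
  rw [Sm, un_pdy hf]
  exact (hf.fderiv_right (by simp)).clm_apply contDiff_const

lemma Sm.pdz (hf : Sm f) : Sm (pdz f) := by
  rw [Sm, un_pdz hf]
  exact (hf.fderiv_right (by simp)).clm_apply contDiff_const

lemma hdx (hf : Sm f) (a b c : ℝ) : HasDerivAt (fun t => f t b c) (pdx f a b c) a := by
  have h : DifferentiableAt ℝ (fun t => f t b c) a := by
    have : (fun t => f t b c) = (un f) ∘ (fun t : ℝ => (t, b, c)) := rfl
    rw [this]
    exact (hf.diffAt (a, b, c)).comp a
      (differentiableAt_id.prodMk (differentiableAt_const _))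
  exact h.hasDerivAt

lemma hdy (hf : Sm f) (a b c : ℝ) : HasDerivAt (fun t => f a t c) (pdy f a b c) b := by
  have h : DifferentiableAt ℝ (fun t => f a t c) b := by
    have : (fun t => f a t c) = (un f) ∘ (fun t : ℝ => (a, t, c)) := rfl
    rw [this]
    exact (hf.diffAt (a, b, c)).comp b
      ((differentiableAt_const _).prodMk (differentiableAt_id.prodMk (differentiableAt_const _)))
  exact h.hasDerivAt

lemma hdz (hf : Sm f) (a b c : ℝ) : HasDerivAt (fun t => f a b t) (pdz f a b c) c := by
  have h : DifferentiableAt ℝ (fun t => f a b t) c := by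
    have : (fun t => f a b t) = (un f) ∘ (fun t : ℝ => (a, b, t)) := rfl
    rw [this]
    exact (hf.diffAt (a, b, c)).comp c
      ((differentiableAt_const _).prodMk ((differentiableAt_const _).prodMk differentiableAt_id))
  exact h.hasDerivAt

lemma fderiv_apply_comm (hf : Sm f) (p : ℝ × ℝ × ℝ) (v w : ℝ × ℝ × ℝ) :
    fderiv ℝ (fun q => fderiv ℝ (un f) q v) p w
      = fderiv ℝ (fun q => fderiv ℝ (un f) q w) p v := by
  have hd : DifferentiableAt ℝ (fderiv ℝ (un f)) p :=
    (hf.fderiv_right (m := 1) (WithTop.coe_le_coe.mpr le_top)).differentiable one_ne_zero p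
  have h1 : ∀ u : ℝ × ℝ × ℝ, fderiv ℝ (fun q => fderiv ℝ (un f) q u) p
      = (fderiv ℝ (fderiv ℝ (un f)) p).flip u := by
    intro u
    have := fderiv_clm_apply (𝕜 := ℝ) hd (differentiableAt_const u)
    simp only [fderiv_fun_const, Pi.zero_apply] at this
    rw [this, ContinuousLinearMap.comp_zero, zero_add]
  rw [h1 v, h1 w]
  have hsymm := (hf.contDiffAt (x := p)).isSymmSndFDerivAt (by rw [minSmoothness_of_isRCLikeNormedField]; exact WithTop.coe_le_coe.mpr le_top)
  simpa [ContinuousLinearMap.flip_apply] using hsymm w v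

lemma pd_comm_xy (hf : Sm f) : pdx (pdy f) = pdy (pdx f) := by
  funext a b c
  rw [pdx_eq hf.pdy, pdy_eq hf.pdx, un_pdy hf, un_pdx hf]
  exact fderiv_apply_comm hf (a, b, c) _ _

lemma pd_comm_xz (hf : Sm f) : pdx (pdz f) = pdz (pdx f) := by
  funext a b c
  rw [pdx_eq hf.pdz, pdz_eq hf.pdx, un_pdz hf, un_pdx hf]
  exact fderiv_apply_comm hf (a, b, c) _ _

lemma pd_comm_yz (hf : Sm f) : pdy (pdz f) = pdz (pdy f) := by
  funext a b c
  rw [pdy_eq hf.pdz, pdz_eq hf.pdy, un_pdz hf, un_pdy hf]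
  exact fderiv_apply_comm hf (a, b, c) _ _

end Stmt12Aux

/-- the operator `L f = f_xx + x² f_yy + y² f_zz` -/
noncomputable def opL (f : ℝ → ℝ → ℝ → ℝ) : ℝ → ℝ → ℝ → ℝ :=
  fun x y z => pdx (pdx f) x y z + x ^ 2 * pdy (pdy f) x y z + y ^ 2 * pdz (pdz f) x y z

/-- square field `Γ(f,g) = f_x g_x + x² f_y g_y + y² f_z g_z` -/
noncomputable def opGamma (f g : ℝ → ℝ → ℝ → ℝ) : ℝ → ℝ → ℝ → ℝ :=
  fun x y z => pdx f x y z * pdx g x y z + x ^ 2 * pdy f x y z * pdy g x y z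
    + y ^ 2 * pdz f x y z * pdz g x y z

open Stmt12Aux in
theorem stmt_12 (f : ℝ → ℝ → ℝ → ℝ)
    (hf : ContDiff ℝ (⊤ : ℕ∞) (fun p : ℝ × ℝ × ℝ => f p.1 p.2.1 p.2.2)) (x y z : ℝ) :
    (1 / 2) * opL (opGamma f f) x y z - opGamma f (opL f) x y z =
      (pdx (pdx f) x y z) ^ 2 + (pdy f x y z) ^ 2 + x ^ 2 * (pdz f x y z) ^ 2
        + 2 * x ^ 2 * (pdy (pdx f) x y z) ^ 2 + 2 * y ^ 2 * (pdz (pdx f) x y z) ^ 2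
        + x ^ 4 * (pdy (pdy f) x y z) ^ 2 + 2 * x ^ 2 * y ^ 2 * (pdz (pdy f) x y z) ^ 2
        + y ^ 4 * (pdz (pdz f) x y z) ^ 2
        + 4 * x * pdy f x y z * pdy (pdx f) x y z
        + 4 * x ^ 2 * y * pdz f x y z * pdz (pdy f) x y z
        - 2 * x * pdx f x y z * pdy (pdy f) x y z
        - 2 * x ^ 2 * y * pdy f x y z * pdz (pdz f) x y z := by
  have hf' : Sm f := hf
  -- first derivatives of Γ(f,f), as functions
  have hGx : ∀ a b c : ℝ, pdx (opGamma f f) a b c =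
      2 * (pdx f a b c * pdx (pdx f) a b c) + 2 * a * pdy f a b c ^ 2
        + 2 * a ^ 2 * (pdy f a b c * pdx (pdy f) a b c)
        + 2 * b ^ 2 * (pdz f a b c * pdx (pdz f) a b c) := by
    intro a b c
    have h := ((((hdx hf'.pdx a b c).mul (hdx hf'.pdx a b c)).add
        (((hasDerivAt_pow 2 a).mul (hdx hf'.pdy a b c)).mul (hdx hf'.pdy a b c))).add
        (((hdx hf'.pdz a b c).const_mul (b ^ 2)).mul (hdx hf'.pdz a b c))).deriv
    exact h.trans (by push_cast [id_eq, Pi.mul_apply, Pi.pow_apply]; ring)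
  have hGy : ∀ a b c : ℝ, pdy (opGamma f f) a b c =
      2 * (pdx f a b c * pdy (pdx f) a b c)
        + 2 * a ^ 2 * (pdy f a b c * pdy (pdy f) a b c)
        + 2 * b * pdz f a b c ^ 2
        + 2 * b ^ 2 * (pdz f a b c * pdy (pdz f) a b c) := by
    intro a b c
    have h := ((((hdy hf'.pdx a b c).mul (hdy hf'.pdx a b c)).add
        (((hdy hf'.pdy a b c).const_mul (a ^ 2)).mul (hdy hf'.pdy a b c))).add
        (((hasDerivAt_pow 2 b).mul (hdy hf'.pdz a b c)).mul (hdy hf'.pdz a b c))).deriv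
    exact h.trans (by push_cast [id_eq, Pi.mul_apply, Pi.pow_apply]; ring)
  have hGz : ∀ a b c : ℝ, pdz (opGamma f f) a b c =
      2 * (pdx f a b c * pdz (pdx f) a b c)
        + 2 * a ^ 2 * (pdy f a b c * pdz (pdy f) a b c)
        + 2 * b ^ 2 * (pdz f a b c * pdz (pdz f) a b c) := by
    intro a b c
    have h := ((((hdz hf'.pdx a b c).mul (hdz hf'.pdx a b c)).add
        (((hdz hf'.pdy a b c).const_mul (a ^ 2)).mul (hdz hf'.pdy a b c))).add
        (((hdz hf'.pdz a b c).const_mul (b ^ 2)).mul (hdz hf'.pdz a b c))).deriv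
    exact h.trans (by push_cast [id_eq, Pi.mul_apply, Pi.pow_apply]; ring)
  have eGx : pdx (opGamma f f) = fun a b c =>
      2 * (pdx f a b c * pdx (pdx f) a b c) + 2 * a * pdy f a b c ^ 2
        + 2 * a ^ 2 * (pdy f a b c * pdx (pdy f) a b c)
        + 2 * b ^ 2 * (pdz f a b c * pdx (pdz f) a b c) :=
    funext fun a => funext fun b => funext fun c => hGx a b c
  have eGy : pdy (opGamma f f) = fun a b c =>
      2 * (pdx f a b c * pdy (pdx f) a b c)
        + 2 * a ^ 2 * (pdy f a b c * pdy (pdy f) a b c)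
        + 2 * b * pdz f a b c ^ 2
        + 2 * b ^ 2 * (pdz f a b c * pdy (pdz f) a b c) :=
    funext fun a => funext fun b => funext fun c => hGy a b c
  have eGz : pdz (opGamma f f) = fun a b c =>
      2 * (pdx f a b c * pdz (pdx f) a b c)
        + 2 * a ^ 2 * (pdy f a b c * pdz (pdy f) a b c)
        + 2 * b ^ 2 * (pdz f a b c * pdz (pdz f) a b c) :=
    funext fun a => funext fun b => funext fun c => hGz a b c
  -- second derivatives of Γ(f,f) at the point
  have hGxx : pdx (pdx (opGamma f f)) x y z =
      2 * pdx (pdx f) x y z ^ 2 + 2 * (pdx f x y z * pdx (pdx (pdx f)) x y z)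
        + 2 * pdy f x y z ^ 2 + 8 * x * (pdy f x y z * pdx (pdy f) x y z)
        + 2 * x ^ 2 * pdx (pdy f) x y z ^ 2
        + 2 * x ^ 2 * (pdy f x y z * pdx (pdx (pdy f)) x y z)
        + 2 * y ^ 2 * pdx (pdz f) x y z ^ 2
        + 2 * y ^ 2 * (pdz f x y z * pdx (pdx (pdz f)) x y z) := by
    rw [eGx]
    have t1 := ((hdx hf'.pdx x y z).mul (hdx hf'.pdx.pdx x y z)).const_mul 2
    have t2 := ((hasDerivAt_id x).const_mul 2).mul ((hdx hf'.pdy x y z).pow 2)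
    have t3 := ((hasDerivAt_pow 2 x).const_mul 2).mul
      ((hdx hf'.pdy x y z).mul (hdx hf'.pdy.pdx x y z))
    have t4 := ((hdx hf'.pdz x y z).mul (hdx hf'.pdz.pdx x y z)).const_mul (2 * y ^ 2)
    have h := (((t1.add t2).add t3).add t4).deriv
    exact h.trans (by push_cast [id_eq, Pi.mul_apply, Pi.pow_apply]; ring)
  have hGyy : pdy (pdy (opGamma f f)) x y z =
      2 * pdy (pdx f) x y z ^ 2 + 2 * (pdx f x y z * pdy (pdy (pdx f)) x y z)
        + 2 * x ^ 2 * pdy (pdy f) x y z ^ 2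
        + 2 * x ^ 2 * (pdy f x y z * pdy (pdy (pdy f)) x y z)
        + 2 * pdz f x y z ^ 2 + 8 * y * (pdz f x y z * pdy (pdz f) x y z)
        + 2 * y ^ 2 * pdy (pdz f) x y z ^ 2
        + 2 * y ^ 2 * (pdz f x y z * pdy (pdy (pdz f)) x y z) := by
    rw [eGy]
    have t1 := ((hdy hf'.pdx x y z).mul (hdy hf'.pdx.pdy x y z)).const_mul 2
    have t2 := ((hdy hf'.pdy x y z).mul (hdy hf'.pdy.pdy x y z)).const_mul (2 * x ^ 2)
    have t3 := ((hasDerivAt_id y).const_mul 2).mul ((hdy hf'.pdz x y z).pow 2)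
    have t4 := ((hasDerivAt_pow 2 y).const_mul 2).mul
      ((hdy hf'.pdz x y z).mul (hdy hf'.pdz.pdy x y z))
    have h := (((t1.add t2).add t3).add t4).deriv
    exact h.trans (by push_cast [id_eq, Pi.mul_apply, Pi.pow_apply]; ring)
  have hGzz : pdz (pdz (opGamma f f)) x y z =
      2 * pdz (pdx f) x y z ^ 2 + 2 * (pdx f x y z * pdz (pdz (pdx f)) x y z)
        + 2 * x ^ 2 * pdz (pdy f) x y z ^ 2
        + 2 * x ^ 2 * (pdy f x y z * pdz (pdz (pdy f)) x y z)
        + 2 * y ^ 2 * pdz (pdz f) x y z ^ 2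
        + 2 * y ^ 2 * (pdz f x y z * pdz (pdz (pdz f)) x y z) := by
    rw [eGz]
    have t1 := ((hdz hf'.pdx x y z).mul (hdz hf'.pdx.pdz x y z)).const_mul 2
    have t2 := ((hdz hf'.pdy x y z).mul (hdz hf'.pdy.pdz x y z)).const_mul (2 * x ^ 2)
    have t3 := ((hdz hf'.pdz x y z).mul (hdz hf'.pdz.pdz x y z)).const_mul (2 * y ^ 2)
    have h := ((t1.add t2).add t3).deriv
    exact h.trans (by push_cast [id_eq, Pi.mul_apply, Pi.pow_apply]; ring)
  -- first derivatives of L f at the point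
  have hLx : pdx (opL f) x y z =
      pdx (pdx (pdx f)) x y z + 2 * x * pdy (pdy f) x y z
        + x ^ 2 * pdx (pdy (pdy f)) x y z + y ^ 2 * pdx (pdz (pdz f)) x y z := by
    have h := (((hdx hf'.pdx.pdx x y z).add
        ((hasDerivAt_pow 2 x).mul (hdx hf'.pdy.pdy x y z))).add
        ((hdx hf'.pdz.pdz x y z).const_mul (y ^ 2))).deriv
    exact h.trans (by push_cast [id_eq, Pi.mul_apply, Pi.pow_apply]; ring)
  have hLy : pdy (opL f) x y z =
      pdy (pdx (pdx f)) x y z + x ^ 2 * pdy (pdy (pdy f)) x y z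
        + 2 * y * pdz (pdz f) x y z + y ^ 2 * pdy (pdz (pdz f)) x y z := by
    have h := (((hdy hf'.pdx.pdx x y z).add
        ((hdy hf'.pdy.pdy x y z).const_mul (x ^ 2))).add
        ((hasDerivAt_pow 2 y).mul (hdy hf'.pdz.pdz x y z))).deriv
    exact h.trans (by push_cast [id_eq, Pi.mul_apply, Pi.pow_apply]; ring)
  have hLz : pdz (opL f) x y z =
      pdz (pdx (pdx f)) x y z + x ^ 2 * pdz (pdy (pdy f)) x y z
        + y ^ 2 * pdz (pdz (pdz f)) x y z := by
    have h := (((hdz hf'.pdx.pdx x y z).add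
        ((hdz hf'.pdy.pdy x y z).const_mul (x ^ 2))).add
        ((hdz hf'.pdz.pdz x y z).const_mul (y ^ 2))).deriv
    exact h.trans (by push_cast [id_eq, Pi.mul_apply, Pi.pow_apply]; ring)
  have e1 : opL (opGamma f f) x y z =
      pdx (pdx (opGamma f f)) x y z + x ^ 2 * pdy (pdy (opGamma f f)) x y z
        + y ^ 2 * pdz (pdz (opGamma f f)) x y z := rfl
  have e2 : opGamma f (opL f) x y z =
      pdx f x y z * pdx (opL f) x y z + x ^ 2 * pdy f x y z * pdy (opL f) x y z
        + y ^ 2 * pdz f x y z * pdz (opL f) x y z := rfl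
  rw [e1, e2, hGxx, hGyy, hGzz, hLx, hLy, hLz]
  simp only [pd_comm_xy hf', pd_comm_xy hf'.pdx, pd_comm_xy hf'.pdy, pd_comm_xy hf'.pdz,
    pd_comm_xz hf', pd_comm_xz hf'.pdx, pd_comm_xz hf'.pdy, pd_comm_xz hf'.pdz,
    pd_comm_yz hf', pd_comm_yz hf'.pdx, pd_comm_yz hf'.pdy, pd_comm_yz hf'.pdz]
  ring
end

section
/- For all real x, y and all real numbers a, b, c, p, q, r, s, u, v (playing the roles of f_x, f_y, f_z, f_{xx}, f_{xy}, f_{xz}, f_{yy}, f_{yz}, f_{zz}), and all r₁, r₂ > 0, the following polynomial inequality holds: [p² + b² + x²c² + 2x²q² + 2y²r² + x⁴s² + 2x²y²u² + y⁴v² + 4x b q + 4x²y c u − 2x a s − 2x²y b v] + r₁[c² + q² + x² s² + (y² + x⁴)u² + x² r² + x²y² v² + 4x c r − 2y b v] + r₂[r² + x² u² + y² v²] ≥ (1 − 4r₁²/r₂)(b² + x² c²) + r₁ c² − (5/r₁ + 2r₁/r₂)(a² + x² b² + y² c²). -/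
theorem stmt_13 (x y a b c p q r s u v r₁ r₂ : ℝ) (hr₁ : 0 < r₁) (hr₂ : 0 < r₂) :
    (p ^ 2 + b ^ 2 + x ^ 2 * c ^ 2 + 2 * x ^ 2 * q ^ 2 + 2 * y ^ 2 * r ^ 2
        + x ^ 4 * s ^ 2 + 2 * x ^ 2 * y ^ 2 * u ^ 2 + y ^ 4 * v ^ 2
        + 4 * x * b * q + 4 * x ^ 2 * y * c * u - 2 * x * a * s - 2 * x ^ 2 * y * b * v)
      + r₁ * (c ^ 2 + q ^ 2 + x ^ 2 * s ^ 2 + (y ^ 2 + x ^ 4) * u ^ 2 + x ^ 2 * r ^ 2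
        + x ^ 2 * y ^ 2 * v ^ 2 + 4 * x * c * r - 2 * y * b * v)
      + r₂ * (r ^ 2 + x ^ 2 * u ^ 2 + y ^ 2 * v ^ 2)
    ≥ (1 - 4 * r₁ ^ 2 / r₂) * (b ^ 2 + x ^ 2 * c ^ 2) + r₁ * c ^ 2
      - (5 / r₁ + 2 * r₁ / r₂) * (a ^ 2 + x ^ 2 * b ^ 2 + y ^ 2 * c ^ 2) := by
  have hr₁' : r₁ ≠ 0 := ne_of_gt hr₁
  have hr₂' : r₂ ≠ 0 := ne_of_gt hr₂
  have hpos : (0:ℝ) < r₁ * r₂ := mul_pos hr₁ hr₂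
  rw [ge_iff_le, ← sub_nonneg]
  have key : r₁ * r₂ *
      (((p ^ 2 + b ^ 2 + x ^ 2 * c ^ 2 + 2 * x ^ 2 * q ^ 2 + 2 * y ^ 2 * r ^ 2
        + x ^ 4 * s ^ 2 + 2 * x ^ 2 * y ^ 2 * u ^ 2 + y ^ 4 * v ^ 2
        + 4 * x * b * q + 4 * x ^ 2 * y * c * u - 2 * x * a * s - 2 * x ^ 2 * y * b * v)
      + r₁ * (c ^ 2 + q ^ 2 + x ^ 2 * s ^ 2 + (y ^ 2 + x ^ 4) * u ^ 2 + x ^ 2 * r ^ 2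
        + x ^ 2 * y ^ 2 * v ^ 2 + 4 * x * c * r - 2 * y * b * v)
      + r₂ * (r ^ 2 + x ^ 2 * u ^ 2 + y ^ 2 * v ^ 2)
      - ((1 - 4 * r₁ ^ 2 / r₂) * (b ^ 2 + x ^ 2 * c ^ 2) + r₁ * c ^ 2
      - (5 / r₁ + 2 * r₁ / r₂) * (a ^ 2 + x ^ 2 * b ^ 2 + y ^ 2 * c ^ 2))))
      = r₂ * (r₁ * x * s - a) ^ 2 + r₂ * (r₁ * q + 2 * x * b) ^ 2
        + r₂ * (r₁ * x ^ 2 * u + 2 * y * c) ^ 2 + r₂ * (r₁ * x * y * v - x * b) ^ 2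
        + r₁ * (r₂ * r + 2 * r₁ * x * c) ^ 2 + r₁ * (r₂ * y * v - r₁ * b) ^ 2
        + r₁ * r₂ * (p ^ 2 + 2 * x ^ 2 * q ^ 2 + 2 * y ^ 2 * r ^ 2 + x ^ 4 * s ^ 2
            + 2 * x ^ 2 * y ^ 2 * u ^ 2 + y ^ 4 * v ^ 2)
        + r₁ ^ 2 * r₂ * (y ^ 2 * u ^ 2 + x ^ 2 * r ^ 2) + r₁ * r₂ ^ 2 * (x ^ 2 * u ^ 2)
        + 3 * r₁ ^ 3 * b ^ 2 + 2 * r₁ ^ 2 * x ^ 2 * b ^ 2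
        + (4 * r₂ + 2 * r₁ ^ 2) * a ^ 2 + (r₂ + 2 * r₁ ^ 2) * y ^ 2 * c ^ 2 := by
    field_simp
    ring
  have hS : 0 ≤ r₁ * r₂ *
      (((p ^ 2 + b ^ 2 + x ^ 2 * c ^ 2 + 2 * x ^ 2 * q ^ 2 + 2 * y ^ 2 * r ^ 2
        + x ^ 4 * s ^ 2 + 2 * x ^ 2 * y ^ 2 * u ^ 2 + y ^ 4 * v ^ 2
        + 4 * x * b * q + 4 * x ^ 2 * y * c * u - 2 * x * a * s - 2 * x ^ 2 * y * b * v)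
      + r₁ * (c ^ 2 + q ^ 2 + x ^ 2 * s ^ 2 + (y ^ 2 + x ^ 4) * u ^ 2 + x ^ 2 * r ^ 2
        + x ^ 2 * y ^ 2 * v ^ 2 + 4 * x * c * r - 2 * y * b * v)
      + r₂ * (r ^ 2 + x ^ 2 * u ^ 2 + y ^ 2 * v ^ 2)
      - ((1 - 4 * r₁ ^ 2 / r₂) * (b ^ 2 + x ^ 2 * c ^ 2) + r₁ * c ^ 2
      - (5 / r₁ + 2 * r₁ / r₂) * (a ^ 2 + x ^ 2 * b ^ 2 + y ^ 2 * c ^ 2)))) := by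
    rw [key]
    positivity
  exact nonneg_of_mul_nonneg_right hS hpos
end
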